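/- Let U(t) := diag(1, 1, 1, e^{it}) be the one-parameter unitary group on ℂ⁴ = ℂ²⊗ℂ² generated by the Hamiltonian H = |11⟩⟨11| which generates the controlled-phase gate. For every real θ with sin θ · cos θ ≠ 0 and every real t, the state U(t)·Ψ(θ) is entangled: there exist no vectors u, v ∈ ℂ² with U(t)·Ψ(θ) = u ⊗ v. Thus no backward (or forward) evolution under the controlled-phase Hamiltonian ever takes Ψ(θ) to a product state. -/
import Mathlib


open Matrix Complex

/-- The computational basis vector |eb⟩ of ℂ²⊗ℂ². -/
def ket (e b : Fin 2) : Fin 2 × Fin 2 → ℂ := fun p => if p = (e, b) then 1 else 0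

/-- Kronecker (tensor) product of two vectors of ℂ². -/
def prodVec (u v : Fin 2 → ℂ) : Fin 2 × Fin 2 → ℂ := fun p => u p.1 * v p.2

/-- Ψ(θ) := (1/√2)·[(1−i)cos θ·|01⟩ − i·sin θ·|10⟩ + sin θ·|11⟩]. -/
noncomputable def Psi (θ : ℝ) : Fin 2 × Fin 2 → ℂ :=
  ((1 / Real.sqrt 2 : ℝ) : ℂ) •
    (((1 - I) * (Real.cos θ : ℂ)) • ket 0 1 + (-I * (Real.sin θ : ℂ)) • ket 1 0 +
      (Real.sin θ : ℂ) • ket 1 1)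

/-- U(t) := diag(1, 1, 1, e^{it}), the one-parameter unitary group generated by the
controlled-phase Hamiltonian H = |11⟩⟨11|. -/
noncomputable def Ucphase (t : ℝ) : Matrix (Fin 2 × Fin 2) (Fin 2 × Fin 2) ℂ :=
  Matrix.diagonal fun p => if p = (1, 1) then Complex.exp (I * t) else 1

/-- For sin θ · cos θ ≠ 0 and every real t, the state U(t)·Ψ(θ) is entangled: no evolution
under the controlled-phase Hamiltonian ever takes Ψ(θ) to a product state. -/
theorem Ucphase_Psi_entangled (θ : ℝ) (h : Real.sin θ * Real.cos θ ≠ 0) (t : ℝ) :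
    ¬ ∃ u v : Fin 2 → ℂ, Ucphase t *ᵥ Psi θ = prodVec u v := by
  rintro ⟨u, v, huv⟩
  have hs : (Real.sin θ : ℂ) ≠ 0 := by
    exact_mod_cast fun hh => h (by simp [hh] : Real.sin θ * Real.cos θ = 0)
  have hc : (Real.cos θ : ℂ) ≠ 0 := by
    exact_mod_cast fun hh => h (by simp [hh] : Real.sin θ * Real.cos θ = 0)
  have hs' : Complex.sin (θ : ℂ) ≠ 0 := by rwa [← Complex.ofReal_sin]
  have hc' : Complex.cos (θ : ℂ) ≠ 0 := by rwa [← Complex.ofReal_cos]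
  have hr : ((Real.sqrt 2 : ℝ) : ℂ)⁻¹ ≠ 0 := by
    have : Real.sqrt 2 ≠ 0 := by positivity
    simp [this]
  have h1mi : (1 - I : ℂ) ≠ 0 := by
    intro hh
    have := sub_eq_zero.mp hh
    simp [Complex.ext_iff] at this
  have h00 := congrFun huv (0, 0)
  have h01 := congrFun huv (0, 1)
  have h10 := congrFun huv (1, 0)
  simp [Ucphase, Psi, prodVec, ket, mulVec_diagonal, Prod.ext_iff] at h00 h01 h10
  have hu0 : u 0 * v 1 ≠ 0 := by
    rw [← h01]; exact mul_ne_zero hr (mul_ne_zero h1mi hc')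
  have hu1 : u 1 * v 0 ≠ 0 := by
    rw [← h10]
    exact neg_ne_zero.mpr (mul_ne_zero hr (mul_ne_zero I_ne_zero hs'))
  rcases h00 with h0 | h0
  · exact hu0 (by simp [h0])
  · exact hu1 (by simp [h0])
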